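/- Let X be a random vector in ℝ^d with finite second moment and positive definite covariance matrix Σ(X), let T be a symmetric positive definite d×d matrix, b ∈ ℝ^d, and set Y = T X + b. Then the affine transport map from X to Y, T_aff(x) = Ax + c with A = Σ(Y)^{1/2}(Σ(Y)^{1/2} Σ(X) Σ(Y)^{1/2})^{−1/2} Σ(Y)^{1/2} and c = E[Y] − A E[X], satisfies A = T and c = b; in particular the pushforward of the law of X under T_aff equals the law of Y, so W₂(T_aff(X), Y) = 0. -/

import Mathlib

open MeasureTheory ProbabilityTheory Matrix
open scoped ENNReal NNReal

noncomputable section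

abbrev Ed (d : ℕ) := EuclideanSpace ℝ (Fin d)

/-- A coupling of `μ` and `ν`: a measure on the product whose marginals are `μ` and `ν`. -/
def IsCoupling {d : ℕ} (γ : Measure (Ed d × Ed d)) (μ ν : Measure (Ed d)) : Prop :=
  γ.map Prod.fst = μ ∧ γ.map Prod.snd = ν

/-- Quadratic transport cost of a coupling. -/
def cost2 {d : ℕ} (γ : Measure (Ed d × Ed d)) : ℝ≥0∞ :=
  ∫⁻ p, ENNReal.ofReal (‖p.1 - p.2‖ ^ 2) ∂γ

/-- Squared 2-Wasserstein distance. -/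
def W2sq {d : ℕ} (μ ν : Measure (Ed d)) : ℝ≥0∞ :=
  ⨅ (γ : Measure (Ed d × Ed d)) (_ : IsCoupling γ μ ν), cost2 γ

/-- 2-Wasserstein distance. -/
def W2 {d : ℕ} (μ ν : Measure (Ed d)) : ℝ :=
  Real.sqrt (W2sq μ ν).toReal

/-- Finite second moment. -/
def FiniteSecondMoment {d : ℕ} (μ : Measure (Ed d)) : Prop :=
  ∫⁻ x, ENNReal.ofReal (‖x‖ ^ 2) ∂μ < ⊤

/-- Mean vector of a measure. -/
def meanVec {d : ℕ} (μ : Measure (Ed d)) : Ed d := ∫ x, x ∂μ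

/-- Covariance matrix of a measure. -/
def covMatrix {d : ℕ} (μ : Measure (Ed d)) : Matrix (Fin d) (Fin d) ℝ :=
  Matrix.of fun i j => ∫ x, (x i - meanVec μ i) * (x j - meanVec μ j) ∂μ

/-- Positive semidefinite square root of a matrix (junk value `0` if not psd). -/
def msqrt {d : ℕ} (S : Matrix (Fin d) (Fin d) ℝ) : Matrix (Fin d) (Fin d) ℝ :=
  @dite _ S.PosSemidef (Classical.dec _) (fun h => (h.1.eigenvectorUnitary : Matrix (Fin d) (Fin d) ℝ) *
    diagonal (Real.sqrt ∘ h.1.eigenvalues) * (star h.1.eigenvectorUnitary : Matrix (Fin d) (Fin d) ℝ)) (fun _ => 0)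

/-- Standard Gaussian measure on `ℝ^d`. -/
def stdGaussian (d : ℕ) : Measure (Ed d) :=
  (Measure.pi fun _ : Fin d => gaussianReal 0 1).map (EuclideanSpace.equiv (Fin d) ℝ).symm

/-- Gaussian measure on `ℝ^d` with mean `m` and covariance `S`. -/
def gaussianE {d : ℕ} (m : Ed d) (S : Matrix (Fin d) (Fin d) ℝ) : Measure (Ed d) :=
  (stdGaussian d).map fun x => m + (msqrt S).toEuclideanLin x

/-- Normal approximation: Gaussian with the same mean and covariance as `μ`. -/
def normalApprox {d : ℕ} (μ : Measure (Ed d)) : Measure (Ed d) :=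
  gaussianE (meanVec μ) (covMatrix μ)

/-! If `μ` has mean `m` and covariance `Σ_X`, its pushforward under `x ↦ T x + b` has mean
`T m + b` and covariance `Σ_Y = T Σ_X T`. The matrix
`A = Σ_Y^{1/2} (Σ_Y^{1/2} Σ_X Σ_Y^{1/2})^{-1/2} Σ_Y^{1/2}` is positive semidefinite and solves
`A Σ_X A = Σ_Y`. For positive definite `Σ_X` this equation has only one positive semidefinite
solution: conjugating by `Σ_X^{1/2}` turns it into `(Σ_X^{1/2} A Σ_X^{1/2})² = Σ_X^{1/2} Σ_Y Σ_X^{1/2}`,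
and positive semidefinite square roots are unique. Since `T` solves it, `A = T`, hence `c = b`,
and the transported law is `ν` itself. -/

open scoped MatrixOrder

theorem Matrix.PosSemidef.eq_of_mul_mul_eq {n : Type*} [Fintype n] [DecidableEq n]
    {S A B : Matrix n n ℝ} (hA : A.PosSemidef) (hS : S.PosDef) (hB : B.PosSemidef)
    (h : A * S * A = B * S * B) : A = B := by
  set W := CFC.sqrt S
  have hW : IsUnit W := (CFC.isUnit_sqrt_iff S hS.posSemidef.nonneg).2 hS.isUnit
  have hWW : W * W = S := CFC.sqrt_mul_sqrt_self S hS.posSemidef.nonneg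
  have hconj : ∀ X : Matrix n n ℝ, X.PosSemidef → 0 ≤ W * X * W := fun X hX =>
    conjugate_nonneg_of_nonneg hX.nonneg (CFC.sqrt_nonneg S)
  have hsq : ∀ X : Matrix n n ℝ, (W * X * W) ^ 2 = W * (X * S * X) * W := fun X => by
    rw [pow_two, ← hWW]; noncomm_ring
  have hconj_eq : W * A * W = W * B * W :=
    (CFC.sq_eq_sq_iff _ _ (hconj A hA) (hconj B hB)).1 (by rw [hsq, hsq, h])
  exact hW.mul_left_cancel (hW.mul_right_cancel hconj_eq)

theorem Matrix.adjoint_toEuclideanCLM {n 𝕜 : Type*} [Fintype n] [DecidableEq n] [RCLike 𝕜]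
    (T : Matrix n n 𝕜) : (toEuclideanCLM (𝕜 := 𝕜) T).adjoint = toEuclideanCLM (𝕜 := 𝕜) Tᴴ := by
  rw [← ContinuousLinearMap.star_eq_adjoint, ← map_star]
  rfl

section Transport

variable {d : ℕ}

lemma msqrt_eq_cfcSqrt {S : Matrix (Fin d) (Fin d) ℝ} (h : S.PosSemidef) :
    msqrt S = CFC.sqrt S := by
  rw [msqrt, dif_pos h, CFC.sqrt_eq_cfc, cfc_nnreal_eq_real _ S, h.isHermitian.cfc_eq]
  simp only [IsHermitian.cfc, Unitary.conjStarAlgAut_apply, RCLike.ofReal_real_eq_id, id_eq,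
    Function.comp_def, Real.sqrt]

def transportMatrix (Sx Sy : Matrix (Fin d) (Fin d) ℝ) : Matrix (Fin d) (Fin d) ℝ :=
  msqrt Sy * (msqrt (msqrt Sy * Sx * msqrt Sy))⁻¹ * msqrt Sy

lemma transportMatrix_eq_cfcSqrt {Sx Sy : Matrix (Fin d) (Fin d) ℝ} (hx : Sx.PosSemidef)
    (hy : Sy.PosSemidef) : transportMatrix Sx Sy =
      CFC.sqrt Sy * (CFC.sqrt (CFC.sqrt Sy * Sx * CFC.sqrt Sy))⁻¹ * CFC.sqrt Sy := by
  rw [transportMatrix, msqrt_eq_cfcSqrt hy,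
    msqrt_eq_cfcSqrt (conjugate_nonneg_of_nonneg hx.nonneg (CFC.sqrt_nonneg Sy)).posSemidef]

lemma posSemidef_transportMatrix {Sx Sy : Matrix (Fin d) (Fin d) ℝ} (hx : Sx.PosSemidef)
    (hy : Sy.PosSemidef) : (transportMatrix Sx Sy).PosSemidef := by
  rw [transportMatrix_eq_cfcSqrt hx hy]
  exact (conjugate_nonneg_of_nonneg (CFC.sqrt_nonneg _).posSemidef.inv.nonneg
    (CFC.sqrt_nonneg Sy)).posSemidef

lemma transportMatrix_mul_mul_self {Sx Sy : Matrix (Fin d) (Fin d) ℝ} (hx : Sx.PosDef)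
    (hy : Sy.PosDef) : transportMatrix Sx Sy * Sx * transportMatrix Sx Sy = Sy := by
  rw [transportMatrix_eq_cfcSqrt hx.posSemidef hy.posSemidef]
  set S := CFC.sqrt Sy
  have hS := hy.isStrictlyPositive.sqrt
  have hSxS := IsStrictlyPositive.conjugate_of_isUnit_of_isSelfAdjoint Sx S hS.isUnit
    hS.isSelfAdjoint hx.isStrictlyPositive
  set R := CFC.sqrt (S * Sx * S)
  have hR : IsUnit R.det := (isUnit_iff_isUnit_det R).1 hSxS.sqrt.isUnit
  calc S * R⁻¹ * S * Sx * (S * R⁻¹ * S) = S * (R⁻¹ * (S * Sx * S) * R⁻¹) * S := by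
        noncomm_ring
    _ = S * S := by
      rw [← CFC.sqrt_mul_sqrt_self (S * Sx * S) hSxS.nonneg, ← Matrix.mul_assoc R⁻¹,
        nonsing_inv_mul _ hR, Matrix.one_mul, mul_nonsing_inv _ hR, Matrix.mul_one]
    _ = Sy := CFC.sqrt_mul_sqrt_self Sy hy.posSemidef.nonneg

lemma transportMatrix_conj {Sx T : Matrix (Fin d) (Fin d) ℝ} (hx : Sx.PosDef) (hT : T.PosDef) :
    transportMatrix Sx (T * Sx * T) = T := by
  have hy : (T * Sx * T).PosDef :=
    (IsStrictlyPositive.conjugate_of_isUnit_of_isSelfAdjoint Sx T hT.isUnit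
      hT.isHermitian hx.isStrictlyPositive).posDef
  exact (posSemidef_transportMatrix hx.posSemidef hy.posSemidef).eq_of_mul_mul_eq hx hT.posSemidef
    (by rw [transportMatrix_mul_mul_self hx hy])

end Transport

section Moments

variable {d : ℕ} {μ : Measure (Ed d)}

lemma FiniteSecondMoment.memLp_two_id (hμ : FiniteSecondMoment μ) : MemLp id 2 μ :=
  (memLp_two_iff_integrable_sq_norm aestronglyMeasurable_id).2
    ⟨by fun_prop, (hasFiniteIntegral_iff_ofReal (ae_of_all _ fun x => by positivity)).2 hμ⟩

lemma covMatrix_apply_eq_covarianceBilin [IsFiniteMeasure μ] (h : MemLp id 2 μ) (i j : Fin d) :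
    covMatrix μ i j =
      covarianceBilin μ (EuclideanSpace.single i 1) (EuclideanSpace.single j 1) := by
  simp [covarianceBilin_apply h, covMatrix, meanVec, EuclideanSpace.inner_single_left]

lemma covarianceBilin_eq_dotProduct_covMatrix_mulVec [IsFiniteMeasure μ] (h : MemLp id 2 μ)
    (x y : Ed d) : covarianceBilin μ x y = x ⬝ᵥ covMatrix μ *ᵥ y := by
  conv_lhs => rw [← (EuclideanSpace.basisFun (Fin d) ℝ).sum_repr' x,
    ← (EuclideanSpace.basisFun (Fin d) ℝ).sum_repr' y]
  simp only [map_sum, map_smul, _root_.sum_apply, _root_.smul_apply, smul_eq_mul,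
    EuclideanSpace.basisFun_apply, EuclideanSpace.inner_single_left, conj_trivial, one_mul,
    dotProduct, mulVec, covMatrix_apply_eq_covarianceBilin h, Finset.mul_sum]
  rw [Finset.sum_comm]
  exact Finset.sum_congr rfl fun i _ => Finset.sum_congr rfl fun j _ => by ring

lemma map_affine_eq_map_map (T : Matrix (Fin d) (Fin d) ℝ) (b : Ed d) :
    μ.map (fun x => T.toEuclideanLin x + b) =
      (μ.map (toEuclideanCLM (𝕜 := ℝ) T)).map (b + ·) := by
  rw [Measure.map_map (by fun_prop) (by fun_prop)]
  exact congrArg μ.map (funext fun x => add_comm _ _)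

lemma meanVec_map_affine [IsProbabilityMeasure μ] (h : Integrable id μ)
    (T : Matrix (Fin d) (Fin d) ℝ) (b : Ed d) :
    meanVec (μ.map fun x => T.toEuclideanLin x + b) = T.toEuclideanLin (meanVec μ) + b := by
  set L := toEuclideanCLM (𝕜 := ℝ) T
  rw [meanVec, integral_map (by fun_prop) (by fun_prop)]
  change ∫ x, L x + b ∂μ = L (∫ x, x ∂μ) + b
  rw [integral_add (L.integrable_comp h : Integrable (fun x => L x) μ) (integrable_const b),
    integral_const, probReal_univ, one_smul, L.integral_comp_id_comm h]

lemma covMatrix_map_affine [IsProbabilityMeasure μ] (h : MemLp id 2 μ)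
    (T : Matrix (Fin d) (Fin d) ℝ) (b : Ed d) :
    covMatrix (μ.map fun x => T.toEuclideanLin x + b) = T * covMatrix μ * Tᵀ := by
  set L := toEuclideanCLM (𝕜 := ℝ) T
  have : IsProbabilityMeasure (μ.map L) := Measure.isProbabilityMeasure_map (by fun_prop)
  have hL : MemLp id 2 (μ.map L) :=
    (memLp_map_measure_iff aestronglyMeasurable_id (by fun_prop)).2 (L.comp_memLp' h)
  have hmap : MemLp id 2 (μ.map fun x => T.toEuclideanLin x + b) := by
    rw [map_affine_eq_map_map]
    exact (measurableEmbedding_addLeft b).memLp_map_measure_iff.2 ((memLp_const b).add hL)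
  ext i j
  rw [covMatrix_apply_eq_covarianceBilin hmap, map_affine_eq_map_map,
    covarianceBilin_map_const_add, covarianceBilin_map h, adjoint_toEuclideanCLM,
    covarianceBilin_eq_dotProduct_covMatrix_mulVec h]
  simp only [dotProduct, conjTranspose_eq_transpose_of_trivial, ofLp_toEuclideanCLM, mulVec,
    transpose_apply, PiLp.single_apply, mul_ite, mul_one, mul_zero, Finset.sum_ite_eq',
    Finset.mem_univ, ↓reduceIte, Finset.mul_sum, Matrix.mul_apply, Finset.sum_mul]
  rw [Finset.sum_comm]
  simp only [mul_assoc]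

end Moments

section Wasserstein

variable {d : ℕ}

lemma isCoupling_map_diag (ν : Measure (Ed d)) : IsCoupling (ν.map fun x => (x, x)) ν ν := by
  constructor <;> rw [Measure.map_map (by fun_prop) (by fun_prop)] <;> exact Measure.map_id

lemma W2_self (ν : Measure (Ed d)) : W2 ν ν = 0 := by
  have hcost : cost2 (ν.map fun x => (x, x)) = 0 := by
    rw [cost2, lintegral_map (by fun_prop) (by fun_prop)]
    simp
  have hle : W2sq ν ν ≤ cost2 (ν.map fun x => (x, x)) :=
    iInf₂_le (f := fun γ _ => cost2 γ) _ (isCoupling_map_diag ν)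
  rw [hcost, nonpos_iff_eq_zero] at hle
  simp [W2, hle]

end Wasserstein

/-- If `Y = T X + b` for a symmetric positive definite `T`, then the affine transport map
from `X` to `Y` recovers `T` and `b` exactly; in particular it pushes the law of `X` to the
law of `Y` and `W₂(T_aff X, Y) = 0`. -/
theorem affine_transport_recovers_affine_map {d : ℕ} (μ : Measure (Ed d))
    [IsProbabilityMeasure μ]
    (hμ : FiniteSecondMoment μ) (hX : (covMatrix μ).PosDef)
    (T : Matrix (Fin d) (Fin d) ℝ) (hT : T.PosDef) (b : Ed d)
    (ν : Measure (Ed d)) (hν : ν = μ.map fun x => T.toEuclideanLin x + b)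
    (A : Matrix (Fin d) (Fin d) ℝ)
    (hA : A = msqrt (covMatrix ν) *
      (msqrt (msqrt (covMatrix ν) * covMatrix μ * msqrt (covMatrix ν)))⁻¹ *
      msqrt (covMatrix ν))
    (c : Ed d) (hc : c = meanVec ν - A.toEuclideanLin (meanVec μ)) :
    A = T ∧ c = b ∧ (μ.map fun x => A.toEuclideanLin x + c) = ν ∧
      W2 (μ.map fun x => A.toEuclideanLin x + c) ν = 0 := by
  have hcov : covMatrix ν = T * covMatrix μ * T := by
    rw [hν, covMatrix_map_affine hμ.memLp_two_id, (isHermitian_iff_isSymm.1 hT.isHermitian).eq]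
  have hAT : A = T := hA.trans (hcov ▸ transportMatrix_conj hX hT)
  have hcb : c = b := by
    rw [hc, hAT, hν, meanVec_map_affine (hμ.memLp_two_id.integrable one_le_two),
      add_sub_cancel_left]
  have hmap : (μ.map fun x => A.toEuclideanLin x + c) = ν := by rw [hAT, hcb, hν]
  exact ⟨hAT, hcb, hmap, hmap ▸ W2_self ν⟩

end
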